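/- arXiv:2104.04583 — 4 statements merged into one kernel-verified Lean document; each statement's English description precedes it below -/
import Mathlib

section
/- Let L be a nondegenerate integral lattice of signature (1,n) (i.e., the associated real quadratic form has exactly one positive eigenvalue), and let h ∈ L satisfy h² > 0. Then for any u, v ∈ L, the determinant of the 3×3 Gram matrix of (h, u, v) is nonnegative; moreover it is zero if and only if h, u, v are linearly dependent over ℚ. -/
open Matrix

/-- The bilinear form `B` is symmetric. -/
def IsSymmBilin {L : Type*} [AddCommGroup L] [Module ℤ L]
    (B : L →ₗ[ℤ] L →ₗ[ℤ] ℤ) : Prop := ∀ x y : L, B x y = B y x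

/-- The integral lattice `(L, B)` is nondegenerate of signature `(1, n)`:
it is free of rank `n + 1` and its real Gram matrix is congruent to
`diag(1, -1, …, -1)`. -/
def HasSigOneN {L : Type*} [AddCommGroup L] [Module ℤ L]
    (B : L →ₗ[ℤ] L →ₗ[ℤ] ℤ) (n : ℕ) : Prop :=
  ∃ b : Module.Basis (Fin (n + 1)) ℤ L, ∃ P : Matrix (Fin (n + 1)) (Fin (n + 1)) ℝ,
    IsUnit P.det ∧
      P.transpose * (Matrix.of fun i j => ((B (b i) (b j) : ℤ) : ℝ)) * P =
        Matrix.diagonal (fun i => if i = 0 then (1 : ℝ) else -1)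

/-- The Gram matrix of a triple of vectors. -/
def gram3 {L : Type*} [AddCommGroup L] [Module ℤ L]
    (B : L →ₗ[ℤ] L →ₗ[ℤ] ℤ) (x y z : L) : Matrix (Fin 3) (Fin 3) ℤ :=
  !![B x x, B x y, B x z; B y x, B y y, B y z; B z x, B z y, B z z]

/-!
Diagonalising over `ℝ` embeds `L` into Minkowski space `ℝ^{1,n}`, where the orthogonal complement
of a timelike vector is negative definite (reverse Cauchy–Schwarz). With `u' = (h·h) u - (h·u) h`
and `v'` likewise, `(h·h)³ · det G(h, u, v) = (u'·u')(v'·v') - (u'·v')²`, which is nonnegative by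
Cauchy–Schwarz on the negative definite `h^⊥`. A kernel vector `w` of `G(h, u, v)` makes
`z = w₀h + w₁u + w₂v` orthogonal to `h`, `u`, `v`, hence to itself, so `z = 0`.
-/

abbrev lorentzDiag (m : ℕ) : Matrix (Fin (m + 1)) (Fin (m + 1)) ℝ :=
  diagonal fun i => if i = 0 then 1 else -1

theorem dotProduct_lorentzDiag_mulVec {m : ℕ} (x y : Fin (m + 1) → ℝ) :
    x ⬝ᵥ (lorentzDiag m *ᵥ y) = x 0 * y 0 - Fin.tail x ⬝ᵥ Fin.tail y := by
  simp [dotProduct, mulVec_diagonal, Fin.sum_univ_succ, Fin.tail, sub_eq_add_neg]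

theorem sq_dotProduct_le {ι R : Type*} [Fintype ι] [CommRing R] [LinearOrder R]
    [IsStrictOrderedRing R] (x y : ι → R) :
    (x ⬝ᵥ y) ^ 2 ≤ (x ⬝ᵥ x) * (y ⬝ᵥ y) := by
  simpa only [dotProduct, sq] using Finset.sum_mul_sq_le_sq_mul_sq Finset.univ x y

theorem lorentz_self_neg_of_orthogonal {m : ℕ} {H W : Fin (m + 1) → ℝ}
    (hH : 0 < H ⬝ᵥ (lorentzDiag m *ᵥ H)) (hHW : H ⬝ᵥ (lorentzDiag m *ᵥ W) = 0) (hW : W ≠ 0) :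
    W ⬝ᵥ (lorentzDiag m *ᵥ W) < 0 := by
  rw [dotProduct_lorentzDiag_mulVec] at hH hHW ⊢
  have hHt : 0 ≤ Fin.tail H ⬝ᵥ Fin.tail H := dotProduct_self_star_nonneg _
  have hH0 : H 0 ≠ 0 := by
    rintro h0
    rw [h0, zero_mul, zero_sub] at hH
    linarith
  by_cases hWt : Fin.tail W = 0
  · have hW0 : W 0 = 0 := by simpa [hWt, hH0] using hHW
    exact absurd (funext fun i => Fin.cases hW0 (congrFun hWt) i) hW
  · have hWt_pos : 0 < Fin.tail W ⬝ᵥ Fin.tail W := dotProduct_self_star_pos_iff.2 hWt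
    have cs := sq_dotProduct_le (Fin.tail H) (Fin.tail W)
    rw [← sub_eq_zero.1 hHW] at cs
    nlinarith [mul_pos (mul_self_pos.2 hH0) hWt_pos]

theorem dotProduct_transpose_mul_mul_mulVec {ι R : Type*} [Fintype ι] [CommSemiring R]
    (A P : Matrix ι ι R) (s t : ι → R) :
    s ⬝ᵥ ((Pᵀ * A * P) *ᵥ t) = (P *ᵥ s) ⬝ᵥ (A *ᵥ (P *ᵥ t)) := by
  rw [← mulVec_mulVec, ← mulVec_mulVec, dotProduct_transpose_mulVec, dotProduct_comm]

section Lattice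

variable {L : Type*} [AddCommGroup L] [Module ℤ L] {B : L →ₗ[ℤ] L →ₗ[ℤ] ℤ}

theorem HasSigOneN.exists_coords {n : ℕ} (hsig : HasSigOneN B n) :
    ∃ c : L → Fin (n + 1) → ℝ, (∀ x, c x = 0 → x = 0) ∧
      ∀ x y, (B x y : ℝ) = c x ⬝ᵥ (lorentzDiag n *ᵥ c y) := by
  obtain ⟨b, P, hP, hPAP⟩ := hsig
  set coord : L → Fin (n + 1) → ℝ := fun x => Int.cast ∘ b.repr x
  have hcoord : ∀ x, P *ᵥ (P⁻¹ *ᵥ coord x) = coord x := fun x => by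
    rw [mulVec_mulVec, mul_nonsing_inv P hP, one_mulVec]
  refine ⟨fun x => P⁻¹ *ᵥ coord x, fun x hx => ?_, fun x y => ?_⟩
  · have : coord x = 0 := by rw [← hcoord x, show P⁻¹ *ᵥ coord x = 0 from hx, mulVec_zero]
    refine b.repr.injective (Finsupp.ext fun i => ?_)
    simpa [coord] using congrFun this i
  · dsimp only
    rw [lorentzDiag, ← hPAP, dotProduct_transpose_mul_mul_mulVec, hcoord, hcoord,
      apply_eq_dotProduct_toMatrix₂_mulVec b b B x y]
    simp only [coord, Int.cast_sum, Int.cast_mul, dotProduct, mulVec, LinearMap.toMatrix₂_apply,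
      of_apply, Function.comp_apply, RingHom.id_apply]

theorem HasSigOneN.neg_of_mem_ker {n : ℕ} (hsig : HasSigOneN B n) {h : L} (hh : 0 < B h h) :
    ∀ w ∈ LinearMap.ker (B h), w ≠ 0 → B w w < 0 := by
  obtain ⟨c, hc0, hc⟩ := hsig.exists_coords
  intro w hw hw0
  have hneg := lorentz_self_neg_of_orthogonal (H := c h) (W := c w)
    (by rw [← hc]; exact_mod_cast hh) (by rw [← hc, LinearMap.mem_ker.1 hw, Int.cast_zero])
    (fun h0 => hw0 (hc0 w h0))
  rw [← hc] at hneg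
  exact_mod_cast hneg

theorem IsSymmBilin.sq_le_mul_of_negDefOn (hB : IsSymmBilin B) {N : Submodule ℤ L}
    (hN : ∀ w ∈ N, w ≠ 0 → B w w < 0) {x y : L} (hx : x ∈ N) (hy : y ∈ N) :
    B x y ^ 2 ≤ B x x * B y y := by
  rcases eq_or_ne x 0 with rfl | hx0
  · simp
  have hxx := hN x hx hx0
  set z := B x x • y - B x y • x
  have hzz : B z z ≤ 0 := by
    rcases eq_or_ne z 0 with hz | hz
    · simp [hz]
    · exact (hN z (N.sub_mem (zsmul_mem hy _) (zsmul_mem hx _)) hz).le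
  have hz_eq : B z z = B x x * (B x x * B y y - B x y ^ 2) := by
    simp only [z, map_sub, map_zsmul, LinearMap.sub_apply, LinearMap.smul_apply, smul_eq_mul,
      hB y x]
    ring
  rw [hz_eq] at hzz
  exact sub_nonneg.1 (nonneg_of_mul_nonpos_right hzz hxx)

variable (B) in
/-- `(h·h)` times the component of `u` orthogonal to `h`, scaled so as to stay in `L`. -/
def perpPart (h u : L) : L := B h h • u - B h u • h

theorem perpPart_mem_ker (h u : L) : perpPart B h u ∈ LinearMap.ker (B h) := by
  simp [perpPart, mul_comm]

theorem IsSymmBilin.apply_perpPart_perpPart (hB : IsSymmBilin B) (h u v : L) :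
    B (perpPart B h u) (perpPart B h v) = B h h * (B h h * B u v - B h u * B h v) := by
  simp only [perpPart, map_sub, map_zsmul, LinearMap.sub_apply, LinearMap.smul_apply, smul_eq_mul,
    hB u h]
  ring

theorem IsSymmBilin.pow_three_mul_det_gram3 (hB : IsSymmBilin B) (h u v : L) :
    B h h ^ 3 * (gram3 B h u v).det =
      B (perpPart B h u) (perpPart B h u) * B (perpPart B h v) (perpPart B h v) -
        B (perpPart B h u) (perpPart B h v) ^ 2 := by
  simp only [hB.apply_perpPart_perpPart, gram3, det_fin_three, of_apply, cons_val', cons_val_zero,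
    cons_val_one, cons_val_two, head_cons, tail_cons, empty_val', cons_val_fin_one, head_fin_const,
    hB u h, hB v h, hB v u]
  ring

theorem IsSymmBilin.det_gram3_nonneg (hB : IsSymmBilin B) {h : L}
    (hneg : ∀ w ∈ LinearMap.ker (B h), w ≠ 0 → B w w < 0) (hh : 0 < B h h) (u v : L) :
    0 ≤ (gram3 B h u v).det := by
  have hcs := hB.sq_le_mul_of_negDefOn hneg (perpPart_mem_ker h u) (perpPart_mem_ker h v)
  rw [← sub_nonneg, ← hB.pow_three_mul_det_gram3] at hcs
  exact nonneg_of_mul_nonneg_right hcs (by positivity)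

theorem gram3_mulVec (h u v : L) (w : Fin 3 → ℤ) :
    gram3 B h u v *ᵥ w =
      ![B h (w 0 • h + w 1 • u + w 2 • v), B u (w 0 • h + w 1 • u + w 2 • v),
        B v (w 0 • h + w 1 • u + w 2 • v)] := by
  ext i
  fin_cases i <;> simp [gram3, mulVec, dotProduct, Fin.sum_univ_three, mul_comm]

theorem det_gram3_eq_zero_iff {h : L} (hneg : ∀ w ∈ LinearMap.ker (B h), w ≠ 0 → B w w < 0)
    (u v : L) :
    (gram3 B h u v).det = 0 ↔
      ∃ a b c : ℤ, ¬(a = 0 ∧ b = 0 ∧ c = 0) ∧ a • h + b • u + c • v = 0 := by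
  rw [← exists_mulVec_eq_zero_iff]
  constructor
  · rintro ⟨w, hw0, hw⟩
    refine ⟨w 0, w 1, w 2, fun hw' => hw0 (funext fun i => ?_), ?_⟩
    · fin_cases i <;> simp [hw']
    by_contra hz
    rw [gram3_mulVec] at hw
    set z := w 0 • h + w 1 • u + w 2 • v
    have hhz : B h z = 0 := by simpa using congrFun hw 0
    have huz : B u z = 0 := by simpa using congrFun hw 1
    have hvz : B v z = 0 := by simpa using congrFun hw 2
    have hz_left : ∀ y, B z y = w 0 * B h y + w 1 * B u y + w 2 * B v y := fun y => by
      simp only [z, map_add, map_zsmul, LinearMap.add_apply, LinearMap.smul_apply, smul_eq_mul]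
    have hzz : B z z = 0 := by rw [hz_left, hhz, huz, hvz]; ring
    exact (hneg z hhz hz).ne hzz
  · rintro ⟨a, b, c, hne, habc⟩
    refine ⟨![a, b, c], fun h0 => hne ?_, ?_⟩
    · exact ⟨by simpa using congrFun h0 0, by simpa using congrFun h0 1,
        by simpa using congrFun h0 2⟩
    · simp [gram3_mulVec, habc]

end Lattice

theorem stmt0 {L : Type*} [AddCommGroup L] [Module ℤ L]
    (n : ℕ) (B : L →ₗ[ℤ] L →ₗ[ℤ] ℤ)
    (hB : IsSymmBilin B) (hsig : HasSigOneN B n)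
    (h u v : L) (hh : 0 < B h h) :
    0 ≤ (gram3 B h u v).det ∧
      ((gram3 B h u v).det = 0 ↔
        ∃ a b c : ℤ, ¬(a = 0 ∧ b = 0 ∧ c = 0) ∧ a • h + b • u + c • v = 0) := by
  have hneg := hsig.neg_of_mem_ker hh
  exact ⟨hB.det_gram3_nonneg hneg hh u v, det_gram3_eq_zero_iff hneg u v⟩
end

section
/- Let L be a nondegenerate integral lattice of signature (1,n), h ∈ L with h² > 0, and m > 0 an integer. Let ι, ῑ ∈ L be two distinct vectors with ι² = ῑ² = 0 and ι·h = ῑ·h = m. Then 1 ≤ ι·ῑ and h²·(ι·ῑ) ≤ 2m². -/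
open Matrix

/-
The form is negative definite on the orthogonal complement of `h`: in coordinates diagonalising
it over `ℝ`, a vector orthogonal to the timelike vector `h` has nonpositive square by
Cauchy–Schwarz, with equality only at `0`. Both bounds then come from vectors orthogonal to `h`:
`ι - ι'` is nonzero with square `-2 ι·ι'`, and `u = h² (ι + ι') - 2m h` has square
`2 h² (h² ι·ι' - 2m²)`.
-/

lemma dotProduct_mul_self_le {ι : Type*} [Fintype ι] (u w : ι → ℝ) :
    (u ⬝ᵥ w) * (u ⬝ᵥ w) ≤ (u ⬝ᵥ u) * (w ⬝ᵥ w) := by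
  simpa only [dotProduct, sq] using Finset.sum_mul_sq_le_sq_mul_sq Finset.univ u w

lemma eq_zero_of_orthogonal_timelike {ι : Type*} [Fintype ι] {u₀ w₀ : ℝ} {u w : ι → ℝ}
    (hw : w ⬝ᵥ w < w₀ * w₀) (huw : u₀ * w₀ = u ⬝ᵥ w) (hu : u ⬝ᵥ u ≤ u₀ * u₀) :
    u₀ = 0 ∧ u = 0 := by
  have hcs := dotProduct_mul_self_le u w
  have hw₀ : 0 ≤ w ⬝ᵥ w := dotProduct_self_star_nonneg w
  have hu₀ : u₀ = 0 := by
    rw [← huw] at hcs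
    have : u₀ * u₀ * (w₀ * w₀ - w ⬝ᵥ w) ≤ 0 := by
      nlinarith [mul_le_mul_of_nonneg_right hu hw₀]
    exact mul_self_eq_zero.mp <| le_antisymm
      (nonpos_of_mul_nonpos_left this (sub_pos.mpr hw)) (mul_self_nonneg u₀)
  refine ⟨hu₀, dotProduct_self_eq_zero.mp (le_antisymm ?_ (dotProduct_self_star_nonneg u))⟩
  simpa [hu₀] using hu

lemma dotProduct_diagonal_minkowski {n : ℕ} (u v : Fin (n + 1) → ℝ) :
    u ⬝ᵥ (diagonal (fun i => if i = 0 then (1 : ℝ) else -1) *ᵥ v) =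
      u 0 * v 0 - Fin.tail u ⬝ᵥ Fin.tail v := by
  simp [dotProduct, mulVec_diagonal, Fin.sum_univ_succ, Fin.succ_ne_zero, Fin.tail, sub_eq_add_neg]

lemma HasSigOneN.exists_minkowski_coords {L : Type*} [AddCommGroup L] [Module ℤ L]
    {B : L →ₗ[ℤ] L →ₗ[ℤ] ℤ} {n : ℕ} (hsig : HasSigOneN B n) :
    ∃ φ : L → Fin (n + 1) → ℝ, (∀ x, φ x = 0 → x = 0) ∧
      ∀ x y, (B x y : ℝ) = φ x 0 * φ y 0 - Fin.tail (φ x) ⬝ᵥ Fin.tail (φ y) := by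
  obtain ⟨b, P, hP, hD⟩ := hsig
  set G : Matrix (Fin (n + 1)) (Fin (n + 1)) ℝ := of fun i j => (B (b i) (b j) : ℝ)
  let c : L → Fin (n + 1) → ℝ := fun x i => b.repr x i
  have hBc : ∀ x y, (B x y : ℝ) = c x ⬝ᵥ (G *ᵥ c y) := by
    intro x y
    rw [apply_eq_dotProduct_toMatrix₂_mulVec b b B x y]
    simp [dotProduct, mulVec, c, G, LinearMap.toMatrix₂_apply]
  have hPc : ∀ x, P *ᵥ (P⁻¹ *ᵥ c x) = c x := fun x => by
    rw [mulVec_mulVec, mul_nonsing_inv P hP, one_mulVec]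
  refine ⟨fun x => P⁻¹ *ᵥ c x, fun x hx => ?_, fun x y => ?_⟩
  · have hcx : c x = 0 := by rw [← hPc x, show P⁻¹ *ᵥ c x = 0 from hx, mulVec_zero]
    exact b.repr.map_eq_zero_iff.mp <| Finsupp.ext fun i => by
      simpa [c] using congrFun hcx i
  · rw [hBc, ← dotProduct_diagonal_minkowski, ← hD, ← hPc x, ← hPc y]
    simp only [hPc, ← mulVec_mulVec, dotProduct_mulVec, vecMul_transpose]

lemma HasSigOneN.apply_self_neg_of_orthogonal {L : Type*} [AddCommGroup L] [Module ℤ L]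
    {B : L →ₗ[ℤ] L →ₗ[ℤ] ℤ} {n : ℕ} (hsig : HasSigOneN B n) {h : L} (hh : 0 < B h h)
    {x : L} (hxh : B x h = 0) (hx : x ≠ 0) : B x x < 0 := by
  obtain ⟨φ, hφ, hB⟩ := hsig.exists_minkowski_coords
  by_contra! hxx
  have htime : Fin.tail (φ h) ⬝ᵥ Fin.tail (φ h) < φ h 0 * φ h 0 := by
    have : (0 : ℝ) < B h h := by exact_mod_cast hh
    linarith [hB h h]
  have horth : φ x 0 * φ h 0 = Fin.tail (φ x) ⬝ᵥ Fin.tail (φ h) := by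
    have := hB x h
    rw [hxh, Int.cast_zero] at this
    linarith
  have hspace : Fin.tail (φ x) ⬝ᵥ Fin.tail (φ x) ≤ φ x 0 * φ x 0 := by
    have : (0 : ℝ) ≤ B x x := by exact_mod_cast hxx
    linarith [hB x x]
  obtain ⟨h0, htail⟩ := eq_zero_of_orthogonal_timelike htime horth hspace
  exact hx (hφ x (funext fun i => Fin.cases h0 (congrFun htail) i))

section Isotropic

variable {L : Type*} [AddCommGroup L] [Module ℤ L] {B : L →ₗ[ℤ] L →ₗ[ℤ] ℤ} {h ι ι' : L}

lemma one_le_apply_of_isotropic (hB : IsSymmBilin B)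
    (hneg : ∀ x, B x h = 0 → x ≠ 0 → B x x < 0) (hne : ι ≠ ι')
    (hι : B ι ι = 0) (hι' : B ι' ι' = 0) (hιh : B ι h = B ι' h) : 1 ≤ B ι ι' := by
  have horth : B (ι - ι') h = 0 := by simp [hιh]
  have hsq : B (ι - ι') (ι - ι') = -2 * B ι ι' := by
    simp only [map_sub, LinearMap.sub_apply, hι, hι', hB ι' ι]
    ring
  linarith [hsq ▸ hneg _ horth (sub_ne_zero.mpr hne)]

lemma mul_apply_le_of_isotropic (hB : IsSymmBilin B)
    (hneg : ∀ x, B x h = 0 → x ≠ 0 → B x x < 0) (hh : 0 < B h h) {m : ℤ}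
    (hι : B ι ι = 0) (hι' : B ι' ι' = 0) (hιh : B ι h = m) (hι'h : B ι' h = m) :
    B h h * B ι ι' ≤ 2 * m ^ 2 := by
  set u := B h h • (ι + ι') - (2 * m) • h
  have horth : B u h = 0 := by
    simp only [u, map_sub, map_add, LinearMap.map_smul_of_tower, LinearMap.sub_apply,
      LinearMap.add_apply, LinearMap.smul_apply, smul_eq_mul, hιh, hι'h]
    ring
  have hsq : B u u = 2 * B h h * (B h h * B ι ι' - 2 * m ^ 2) := by
    simp only [u, map_sub, map_add, LinearMap.map_smul_of_tower, LinearMap.sub_apply,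
      LinearMap.add_apply, LinearMap.smul_apply, smul_eq_mul, hι, hι', hB ι' ι, hB h ι, hB h ι',
      hιh, hι'h]
    ring
  have hnonpos : B u u ≤ 0 := by
    rcases eq_or_ne u 0 with hu | hu
    · simp [hu]
    · exact (hneg u horth hu).le
  rw [hsq] at hnonpos
  linarith [nonpos_of_mul_nonpos_right hnonpos (by positivity)]

end Isotropic

theorem stmt4_general {L : Type*} [AddCommGroup L] [Module ℤ L]
    (n : ℕ) (B : L →ₗ[ℤ] L →ₗ[ℤ] ℤ)
    (hB : IsSymmBilin B) (hsig : HasSigOneN B n)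
    (h : L) (hh : 0 < B h h) (m : ℤ)
    (ι ι' : L) (hne : ι ≠ ι')
    (hι : B ι ι = 0) (hι' : B ι' ι' = 0)
    (hιh : B ι h = m) (hι'h : B ι' h = m) :
    1 ≤ B ι ι' ∧ B h h * B ι ι' ≤ 2 * m ^ 2 := by
  have hneg : ∀ x, B x h = 0 → x ≠ 0 → B x x < 0 := fun _ =>
    hsig.apply_self_neg_of_orthogonal hh
  exact ⟨one_le_apply_of_isotropic hB hneg hne hι hι' (hιh.trans hι'h.symm),
    mul_apply_le_of_isotropic hB hneg hh hι hι' hιh hι'h⟩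

theorem stmt4 {L : Type*} [AddCommGroup L] [Module ℤ L]
    (n : ℕ) (B : L →ₗ[ℤ] L →ₗ[ℤ] ℤ)
    (hB : IsSymmBilin B) (hsig : HasSigOneN B n)
    (h : L) (hh : 0 < B h h) (m : ℤ) (hm : 0 < m)
    (ι ι' : L) (hne : ι ≠ ι')
    (hι : B ι ι = 0) (hι' : B ι' ι' = 0)
    (hιh : B ι h = m) (hι'h : B ι' h = m) :
    1 ≤ B ι ι' ∧ B h h * B ι ι' ≤ 2 * m ^ 2 :=
  stmt4_general n B hB hsig h hh m ι ι' hne hι hι' hιh hι'h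
end

section
/- Let L be a nondegenerate integral lattice of signature (1,n), h ∈ L with h² > 0, m, n, a positive integers. Suppose ι ∈ L satisfies ι² = 0 and ι·h = m, and r ∈ L satisfies r² = −2, r·h = n, and ι·r = −a. Then a²·h² ≤ 2m(m − an). -/
open Matrix

/-!
Through the congruence in `HasSigOneN` the lattice embeds isometrically into Minkowski space
`ℝ^{1,N}`. There the form is negative semidefinite on the orthogonal complement of any `u` with
`u² > 0` (Cauchy–Schwarz on the spatial coordinates), so the Cauchy–Schwarz inequality, reversed,
for the projections `u² x - (u·x) u` and `u² y - (u·y) u` says that the Gram determinant of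
`(u, x, y)` is nonnegative. For `(h, ι, r)` that determinant is `2m(m - an) - a² h²`.
-/

noncomputable def minkowskiForm (d : ℕ) : LinearMap.BilinForm ℝ (Fin (d + 1) → ℝ) :=
  Matrix.toBilin' (diagonal fun i => if i = 0 then 1 else -1)

theorem minkowskiForm_apply (d : ℕ) (u v : Fin (d + 1) → ℝ) :
    minkowskiForm d u v = u 0 * v 0 - ∑ i : Fin d, u i.succ * v i.succ := by
  simp [minkowskiForm, Matrix.toBilin'_apply', dotProduct, mulVec_diagonal, Fin.sum_univ_succ,
    sub_eq_add_neg]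

theorem minkowskiForm_isSymm (d : ℕ) : (minkowskiForm d).IsSymm :=
  LinearMap.BilinForm.isSymm_def.2 fun u v => by simp only [minkowskiForm_apply, mul_comm]

theorem minkowskiForm_self_nonpos_of_apply_eq_zero {d : ℕ} {u v : Fin (d + 1) → ℝ}
    (hu : 0 < minkowskiForm d u u) (huv : minkowskiForm d u v = 0) :
    minkowskiForm d v v ≤ 0 := by
  rw [minkowskiForm_apply] at *
  simp only [← sq] at hu ⊢
  have hcs := Finset.sum_mul_sq_le_sq_mul_sq Finset.univ (fun i : Fin d => u i.succ)
    (fun i => v i.succ)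
  rw [show ∑ i : Fin d, u i.succ * v i.succ = u 0 * v 0 by linarith] at hcs
  have hu' : 0 ≤ ∑ i : Fin d, u i.succ ^ 2 := Finset.sum_nonneg fun i _ => sq_nonneg _
  have hv' : 0 ≤ ∑ i : Fin d, v i.succ ^ 2 := Finset.sum_nonneg fun i _ => sq_nonneg _
  by_contra! hv
  nlinarith [mul_lt_mul_of_pos_right hu (hv'.trans_lt (sub_pos.1 hv)),
    mul_le_mul_of_nonneg_left (sub_pos.1 hv).le hu']

namespace LinearMap.BilinForm

variable {V : Type*} [AddCommGroup V] [Module ℝ V] {Q : LinearMap.BilinForm ℝ V}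

theorem apply_mul_apply_le_of_self_nonpos_on_ker {u : V} (hQ : ∀ v, Q u v = 0 → Q v v ≤ 0)
    {v w : V} (hv : Q u v = 0) (hw : Q u w = 0) : Q v w * Q w v ≤ Q v v * Q w w := by
  let p := LinearMap.ker (Q u)
  have := apply_mul_apply_le_of_forall_zero_le (-(Q.domRestrict₁₂ p p))
    (fun x => by simpa [domRestrict₁₂_apply] using hQ x x.2) ⟨v, hv⟩ ⟨w, hw⟩
  simpa [domRestrict₁₂_apply] using this

theorem det_gram_nonneg_of_self_nonpos_on_ker (hQs : Q.IsSymm) {u : V} (hu : 0 < Q u u)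
    (hQ : ∀ v, Q u v = 0 → Q v v ≤ 0) (x y : V) :
    0 ≤ !![Q u u, Q u x, Q u y; Q x u, Q x x, Q x y; Q y u, Q y x, Q y y].det := by
  have hv : Q u (Q u u • x - Q u x • u) = 0 := by simp only [map_sub, map_smul, smul_eq_mul]; ring
  have hw : Q u (Q u u • y - Q u y • u) = 0 := by simp only [map_sub, map_smul, smul_eq_mul]; ring
  have hcs := apply_mul_apply_le_of_self_nonpos_on_ker hQ hv hw
  simp only [map_sub, map_smul, LinearMap.sub_apply, LinearMap.smul_apply, smul_eq_mul,
    hQs.eq x u, hQs.eq y u, hQs.eq y x] at hcs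
  -- The Cauchy–Schwarz defect of the projections onto `u`ᗮ is `(Q u u) ^ 3` times the determinant.
  rw [Matrix.det_fin_three]
  simp only [of_apply, cons_val, cons_val_zero, cons_val_one, hQs.eq x u, hQs.eq y u, hQs.eq y x]
  refine nonneg_of_mul_nonneg_right ?_ (pow_pos hu 3)
  linarith [hcs]

end LinearMap.BilinForm

section Lattice

variable {L : Type*} [AddCommGroup L] [Module ℤ L] {B : L →ₗ[ℤ] L →ₗ[ℤ] ℤ} {N : ℕ}

theorem HasSigOneN.exists_minkowskiForm_eq (hsig : HasSigOneN B N) :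
    ∃ f : L → Fin (N + 1) → ℝ, ∀ x y, (B x y : ℝ) = minkowskiForm N (f x) (f y) := by
  obtain ⟨b, P, hP, hPGP⟩ := hsig
  set G : Matrix (Fin (N + 1)) (Fin (N + 1)) ℝ := of fun i j => (B (b i) (b j) : ℝ)
  have hG : G = (P⁻¹)ᵀ * diagonal (fun i => if i = 0 then 1 else -1) * P⁻¹ := by
    rw [← hPGP, transpose_nonsing_inv, Matrix.mul_assoc, mul_nonsing_inv_cancel_right _ _ hP,
      nonsing_inv_mul_cancel_left _ _ (by simpa using hP)]
  refine ⟨fun x => P⁻¹ *ᵥ fun i => (b.repr x i : ℝ), fun x y => ?_⟩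
  have hBG : (B x y : ℝ) = Matrix.toBilin' G (fun i => (b.repr x i : ℝ)) fun i => b.repr y i := by
    rw [apply_eq_dotProduct_toMatrix₂_mulVec b b B x y, Matrix.toBilin'_apply',
      ← eq_intCast (Int.castRingHom ℝ), RingHom.map_dotProduct]
    congr 1
    ext i
    simp [mulVec, dotProduct, G]
  rw [hBG, hG, ← Matrix.toBilin'_comp]
  rfl

theorem HasSigOneN.isSymmBilin (hsig : HasSigOneN B N) : IsSymmBilin B := by
  obtain ⟨f, hf⟩ := hsig.exists_minkowskiForm_eq
  intro x y
  exact_mod_cast (hf x y).trans (((minkowskiForm_isSymm N).eq _ _).trans (hf y x).symm)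

theorem HasSigOneN.det_gram3_nonneg (hsig : HasSigOneN B N) {h : L} (hh : 0 < B h h)
    (x y : L) : 0 ≤ (gram3 B h x y).det := by
  obtain ⟨f, hf⟩ := hsig.exists_minkowskiForm_eq
  have hdet := LinearMap.BilinForm.det_gram_nonneg_of_self_nonpos_on_ker (minkowskiForm_isSymm N)
    (by rw [← hf]; exact_mod_cast hh)
    (fun v hv => minkowskiForm_self_nonpos_of_apply_eq_zero (by rw [← hf]; exact_mod_cast hh) hv)
    (f x) (f y)
  simp only [← hf] at hdet
  rw [det_fin_three] at hdet ⊢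
  simp only [gram3, of_apply, cons_val, cons_val_zero, cons_val_one] at hdet ⊢
  exact_mod_cast hdet

end Lattice

theorem stmt8_general {L : Type*} [AddCommGroup L] [Module ℤ L]
    (N : ℕ) (B : L →ₗ[ℤ] L →ₗ[ℤ] ℤ)
    (hsig : HasSigOneN B N)
    (h : L) (hh : 0 < B h h)
    (m n a : ℤ)
    (ι : L) (hι : B ι ι = 0) (hιh : B ι h = m)
    (r : L) (hr : B r r = -2) (hrh : B r h = n) (hιr : B ι r = -a) :
    a ^ 2 * B h h ≤ 2 * m * (m - a * n) := by
  have hsymm := hsig.isSymmBilin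
  have hdet := hsig.det_gram3_nonneg hh ι r
  rw [det_fin_three] at hdet
  simp only [gram3, of_apply, cons_val, cons_val_zero, cons_val_one, hsymm h ι, hsymm h r,
    hsymm r ι, hι, hιh, hr, hrh, hιr] at hdet
  linarith

theorem stmt8 {L : Type*} [AddCommGroup L] [Module ℤ L]
    (N : ℕ) (B : L →ₗ[ℤ] L →ₗ[ℤ] ℤ)
    (hB : IsSymmBilin B) (hsig : HasSigOneN B N)
    (h : L) (hh : 0 < B h h)
    (m n a : ℤ) (hm : 0 < m) (hn : 0 < n) (ha : 0 < a)
    (ι : L) (hι : B ι ι = 0) (hιh : B ι h = m)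
    (r : L) (hr : B r r = -2) (hrh : B r h = n) (hιr : B ι r = -a) :
    a ^ 2 * B h h ≤ 2 * m * (m - a * n) :=
  stmt8_general N B hsig h hh m n a ι hι hιh r hr hrh hιr
end

section
/- Every binary linear code of length 16 and minimum Hamming distance at least 8 has dimension at most 5. -/
open Matrix

/-!
Count the pairs (codeword, coordinate where it is nonzero) in two ways: every nonzero codeword
contributes at least `d`, while in a binary linear code each coordinate is nonzero on at most
half of the codewords. For length `n` this gives `2d(|C| - 1) ≤ n|C|`, which is vacuous for
`d = 8`, `n = 16`; so first shorten the code at one coordinate. The codewords vanishing there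
form a subcode of codimension at most one, supported on `15` coordinates, and the bound
`16(|C'| - 1) ≤ 15|C'|` forces `|C'| ≤ 16`, i.e. `dim C' ≤ 4`.
-/

open Module Finset

theorem Submodule.finrank_le_finrank_inf_ker_add_one {K V : Type*} [DivisionRing K]
    [AddCommGroup V] [Module K V] [FiniteDimensional K V] (p : Submodule K V) (f : V →ₗ[K] K) :
    finrank K p ≤ finrank K ↥(p ⊓ LinearMap.ker f) + 1 := by
  have h_inf := Submodule.finrank_sup_add_finrank_inf_eq p (LinearMap.ker f)
  have h_rank := f.finrank_range_add_finrank_ker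
  have h_range : finrank K (LinearMap.range f) ≤ 1 := by
    simpa using Submodule.finrank_le (LinearMap.range f)
  have h_sup := Submodule.finrank_le (p ⊔ LinearMap.ker f)
  omega

section Plotkin

variable {ι : Type*} (C : Submodule (ZMod 2) (ι → ZMod 2)) [Fintype C]

theorem sum_hammingNorm_eq_sum_card_filter_ne_zero [Fintype ι] :
    ∑ c : C, hammingNorm (c : ι → ZMod 2) = ∑ j, #{c : C | (c : ι → ZMod 2) j ≠ 0} := by
  simp only [hammingNorm, card_filter]
  exact sum_comm

theorem two_mul_card_filter_ne_zero_le (j : ι) :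
    2 * #{c : C | (c : ι → ZMod 2) j ≠ 0} ≤ Fintype.card C := by
  set A := ({c : C | (c : ι → ZMod 2) j ≠ 0} : Finset C)
  have h_compl : #A + #{c : C | ¬ (c : ι → ZMod 2) j ≠ 0} = Fintype.card C :=
    card_filter_add_card_filter_not _
  suffices #A ≤ #{c : C | ¬ (c : ι → ZMod 2) j ≠ 0} by omega
  obtain h | ⟨c₀, hc₀⟩ := A.eq_empty_or_nonempty
  · simp [h]
  · -- translation by a codeword that is nonzero at `j` maps `A` injectively into its complement
    have h_one : ∀ a : ZMod 2, a ≠ 0 → a = 1 := by decide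
    have hc₀ := h_one _ (mem_filter.mp hc₀).2
    refine card_le_card_of_injOn (· + c₀) (fun c hc => ?_) (add_left_injective c₀).injOn
    have hc := h_one _ (mem_filter.mp hc).2
    simp only [coe_filter, mem_univ, true_and, Set.mem_ofPred_eq, not_not,
      Submodule.coe_add, Pi.add_apply, hc, hc₀]
    rfl

theorem card_sub_one_mul_le_sum_hammingNorm [Fintype ι] {d : ℕ}
    (hd : ∀ c ∈ C, c ≠ 0 → d ≤ hammingNorm c) :
    d * (Fintype.card C - 1) ≤ ∑ c : C, hammingNorm (c : ι → ZMod 2) := by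
  calc d * (Fintype.card C - 1) = #(univ.erase (0 : C)) • d := by
        rw [card_erase_of_mem (mem_univ _), card_univ, smul_eq_mul, mul_comm]
    _ ≤ ∑ c ∈ univ.erase (0 : C), hammingNorm (c : ι → ZMod 2) :=
        card_nsmul_le_sum _ _ _ fun c hc =>
          hd c c.2 fun h => ne_of_mem_erase hc (Subtype.ext h)
    _ ≤ ∑ c : C, hammingNorm (c : ι → ZMod 2) := sum_le_sum_of_subset (erase_subset _ _)

/-- The Plotkin bound. -/
theorem two_mul_mul_card_sub_one_le [Fintype ι] (s : Finset ι)
    (hs : ∀ c ∈ C, ∀ j ∉ s, c j = 0) {d : ℕ} (hd : ∀ c ∈ C, c ≠ 0 → d ≤ hammingNorm c) :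
    2 * d * (Fintype.card C - 1) ≤ #s * Fintype.card C := by
  have h_support : ∑ j, #{c : C | (c : ι → ZMod 2) j ≠ 0} =
      ∑ j ∈ s, #{c : C | (c : ι → ZMod 2) j ≠ 0} := by
    refine (sum_subset (subset_univ s) fun j _ hj => ?_).symm
    simp only [card_eq_zero, filter_eq_empty_iff, mem_univ, not_not, forall_const]
    exact fun c => hs c c.2 j hj
  calc 2 * d * (Fintype.card C - 1)
      ≤ 2 * ∑ c : C, hammingNorm (c : ι → ZMod 2) := by
        rw [mul_assoc]; exact Nat.mul_le_mul_left 2 (card_sub_one_mul_le_sum_hammingNorm C hd)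
    _ = ∑ j ∈ s, 2 * #{c : C | (c : ι → ZMod 2) j ≠ 0} := by
        rw [sum_hammingNorm_eq_sum_card_filter_ne_zero, h_support, mul_sum]
    _ ≤ ∑ _j ∈ s, Fintype.card C := sum_le_sum fun j _ => two_mul_card_filter_ne_zero_le C j
    _ = #s * Fintype.card C := by rw [sum_const, smul_eq_mul]

end Plotkin

theorem stmt18 (C : Submodule (ZMod 2) (Fin 16 → ZMod 2))
    (hdist : ∀ c ∈ C, c ≠ 0 → 8 ≤ hammingNorm c) :
    Module.finrank (ZMod 2) C ≤ 5 := by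
  classical
  let shortened := C ⊓ LinearMap.ker (LinearMap.proj 0 : (Fin 16 → ZMod 2) →ₗ[ZMod 2] ZMod 2)
  have h_codim : finrank (ZMod 2) C ≤ finrank (ZMod 2) shortened + 1 :=
    C.finrank_le_finrank_inf_ker_add_one _
  have h_support : ∀ c ∈ shortened, ∀ j ∉ univ.erase 0, c j = 0 := by
    intro c hc j hj
    obtain rfl : j = 0 := by simpa using hj
    exact hc.2
  have h_plotkin := two_mul_mul_card_sub_one_le shortened (univ.erase 0) h_support
    (d := 8) fun c hc => hdist c hc.1
  have h_card : Fintype.card shortened ≤ 2 ^ 4 := by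
    rw [card_erase_of_mem (mem_univ _), card_univ, Fintype.card_fin] at h_plotkin
    omega
  rw [card_eq_pow_finrank (K := ZMod 2), ZMod.card, Nat.pow_le_pow_iff_right (by norm_num)]
    at h_card
  omega
end
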